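/- arXiv:1502.02142 — 4 statements merged into one kernel-verified Lean document; each statement's English description precedes it below -/
import Mathlib

section
/- Uniqueness part of the abstract well-posedness theorem (Theorem 1.1): under hypotheses (H1) and (H2), the abstract evolution problem in mixed form has at most one strong solution: if (p₁, u₁) and (p₂, u₂) are both strong solutions on [0,T] with the same source term L and the same initial value p₀, then p₁(t) = p₂(t) and u₁(t) = u₂(t) for every t ∈ [0,T]. -/
/-!
The difference `q = p₁ - p₂`, `w = u₁ - u₂` solves the homogeneous problem. Testing its second
equation with `q` and the first with `w` gives the energy identity
`½ (‖q‖²)' = ⟪q', q⟫ = -c(q, q) - a(w, w) ≤ 0`, so `‖q‖²` decreases from `‖q 0‖² = 0` and `q = 0`;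
then `a(w, ·) = b(·, q) = 0`, and positive definiteness of `a` forces `w = 0`.
-/

open MeasureTheory Set
open scoped RealInnerProductSpace

theorem eq_zero_of_hasDerivAt_of_inner_deriv_nonpos {E : Type*}
    [NormedAddCommGroup E] [InnerProductSpace ℝ E] {q q' : ℝ → E} {t₀ t₁ : ℝ}
    (hq : ∀ t ∈ Icc t₀ t₁, HasDerivAt q (q' t) t)
    (hdiss : ∀ t ∈ Icc t₀ t₁, ⟪q' t, q t⟫ ≤ 0) (hq₀ : q t₀ = 0) :
    ∀ t ∈ Icc t₀ t₁, q t = 0 := by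
  have hnormSq : ∀ t ∈ Icc t₀ t₁, HasDerivAt (‖q ·‖ ^ 2) (2 * ⟪q t, q' t⟫) t :=
    fun t ht => (hq t ht).norm_sq
  have hanti : AntitoneOn (‖q ·‖ ^ 2) (Icc t₀ t₁) := by
    refine antitoneOn_of_hasDerivWithinAt_nonpos (convex_Icc t₀ t₁)
      (fun t ht => (hnormSq t ht).continuousAt.continuousWithinAt)
      (fun t ht => (hnormSq t (interior_subset ht)).hasDerivWithinAt) fun t ht => ?_
    have := hdiss t (interior_subset ht)
    rw [real_inner_comm]
    linarith
  intro t ht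
  have hle : ‖q t‖ ^ 2 ≤ ‖q t₀‖ ^ 2 := hanti ⟨le_rfl, ht.1.trans ht.2⟩ ht ht.1
  rw [hq₀, norm_zero, zero_pow two_ne_zero] at hle
  simpa using le_antisymm hle (sq_nonneg _)

section MixedForm

variable {M V : Type*} [NormedAddCommGroup M] [InnerProductSpace ℝ M]
  [NormedAddCommGroup V] [InnerProductSpace ℝ V]
  {a : V →L[ℝ] V →L[ℝ] ℝ} {b : V →L[ℝ] M →L[ℝ] ℝ} {c : M →L[ℝ] M →L[ℝ] ℝ}

theorem eq_of_forall_apply_eq_of_posDef (ha : ∀ u : V, u ≠ 0 → 0 < a u u) {u₁ u₂ : V}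
    (h : ∀ v, a u₁ v = a u₂ v) : u₁ = u₂ := by
  by_contra hne
  have hpos := ha (u₁ - u₂) (sub_ne_zero.mpr hne)
  simp only [map_sub, sub_apply, h, sub_self] at hpos
  exact lt_irrefl 0 hpos

theorem inner_nonpos_of_homogeneous_mixed (ha : ∀ u : V, 0 ≤ a u u)
    (hc : ∀ μ : M, 0 ≤ c μ μ) {q q' : M} {w : V}
    (hfirst : ∀ v, a w v = b v q) (hsecond : ∀ μ, ⟪q', μ⟫ + c q μ + b w μ = 0) :
    ⟪q', q⟫ ≤ 0 := by
  have := hsecond q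
  rw [← hfirst w] at this
  linarith [ha w, hc q]

theorem inner_sub_nonpos_of_mixed (ha : ∀ u : V, 0 ≤ a u u) (hc : ∀ μ : M, 0 ≤ c μ μ)
    {p₁ p₁' p₂ p₂' ℓ : M} {u₁ u₂ : V}
    (h₁a : ∀ v, a u₁ v = b v p₁) (h₁b : ∀ μ, ⟪p₁', μ⟫ + c p₁ μ + b u₁ μ = ⟪ℓ, μ⟫)
    (h₂a : ∀ v, a u₂ v = b v p₂) (h₂b : ∀ μ, ⟪p₂', μ⟫ + c p₂ μ + b u₂ μ = ⟪ℓ, μ⟫) :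
    ⟪p₁' - p₂', p₁ - p₂⟫ ≤ 0 := by
  refine inner_nonpos_of_homogeneous_mixed (b := b) ha hc (w := u₁ - u₂) (fun v => ?_) fun μ => ?_
  · simp only [map_sub, sub_apply, h₁a, h₂a]
  · have := h₁b μ
    have := h₂b μ
    simp only [map_sub, sub_apply, inner_sub_left]
    linarith

end MixedForm

theorem stmt_1_general
    {M V : Type*}
    [NormedAddCommGroup M] [InnerProductSpace ℝ M]
    [NormedAddCommGroup V] [InnerProductSpace ℝ V]
    (a : V →L[ℝ] V →L[ℝ] ℝ) (b : V →L[ℝ] M →L[ℝ] ℝ) (c : M →L[ℝ] M →L[ℝ] ℝ)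
    (H1 : ∀ u : V, u ≠ 0 → 0 < a u u)
    (H2 : ∀ μ : M, 0 ≤ c μ μ)
    (T : ℝ)
    (L : ℝ → M)
    (p₀ : M)
    (p₁ p₁' p₂ p₂' : ℝ → M) (u₁ u₂ : ℝ → V)
    -- (p₁, u₁) is a strong solution
    (hp₁0 : p₁ 0 = p₀)
    (hp₁deriv : ∀ t ∈ Icc (0:ℝ) T, HasDerivAt p₁ (p₁' t) t)
    (heq₁a : ∀ t ∈ Icc (0:ℝ) T, ∀ v : V, a (u₁ t) v = b v (p₁ t))
    (heq₁b : ∀ t ∈ Icc (0:ℝ) T, ∀ μ : M,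
      ⟪p₁' t, μ⟫ + c (p₁ t) μ + b (u₁ t) μ = ⟪L t, μ⟫)
    -- (p₂, u₂) is a strong solution
    (hp₂0 : p₂ 0 = p₀)
    (hp₂deriv : ∀ t ∈ Icc (0:ℝ) T, HasDerivAt p₂ (p₂' t) t)
    (heq₂a : ∀ t ∈ Icc (0:ℝ) T, ∀ v : V, a (u₂ t) v = b v (p₂ t))
    (heq₂b : ∀ t ∈ Icc (0:ℝ) T, ∀ μ : M,
      ⟪p₂' t, μ⟫ + c (p₂ t) μ + b (u₂ t) μ = ⟪L t, μ⟫) :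
    ∀ t ∈ Icc (0:ℝ) T, p₁ t = p₂ t ∧ u₁ t = u₂ t := by
  have ha_nonneg : ∀ u : V, 0 ≤ a u u := fun u =>
    (eq_or_ne u 0).elim (fun h => by simp [h]) fun h => (H1 u h).le
  have hp : ∀ t ∈ Icc (0:ℝ) T, p₁ t = p₂ t := by
    have := eq_zero_of_hasDerivAt_of_inner_deriv_nonpos (q := p₁ - p₂) (q' := p₁' - p₂')
      (fun t ht => (hp₁deriv t ht).sub (hp₂deriv t ht))
      (fun t ht => inner_sub_nonpos_of_mixed ha_nonneg H2
        (heq₁a t ht) (heq₁b t ht) (heq₂a t ht) (heq₂b t ht))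
      (by simp [hp₁0, hp₂0])
    exact fun t ht => sub_eq_zero.mp (this t ht)
  intro t ht
  refine ⟨hp t ht, eq_of_forall_apply_eq_of_posDef H1 fun v => ?_⟩
  rw [heq₁a t ht, heq₂a t ht, hp t ht]

/-- Uniqueness part of the abstract well-posedness theorem (Theorem 1.1). -/
theorem stmt_1
    {M V : Type*}
    [NormedAddCommGroup M] [InnerProductSpace ℝ M] [CompleteSpace M]
    [NormedAddCommGroup V] [InnerProductSpace ℝ V] [CompleteSpace V]
    (a : V →L[ℝ] V →L[ℝ] ℝ) (b : V →L[ℝ] M →L[ℝ] ℝ) (c : M →L[ℝ] M →L[ℝ] ℝ)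
    (H1 : ∀ u : V, u ≠ 0 → 0 < a u u)
    (H2 : ∀ μ : M, 0 ≤ c μ μ)
    (T : ℝ) (hT : 0 < T)
    (L : ℝ → M) (hLmeas : StronglyMeasurable L)
    (hLint : IntegrableOn (fun t => ‖L t‖ ^ 2) (Icc 0 T))
    (p₀ : M)
    (p₁ p₁' p₂ p₂' : ℝ → M) (u₁ u₂ : ℝ → V)
    -- (p₁, u₁) is a strong solution
    (hp₁cont : ContinuousOn p₁ (Icc 0 T)) (hp₁0 : p₁ 0 = p₀)
    (hp₁deriv : ∀ t ∈ Icc (0:ℝ) T, HasDerivAt p₁ (p₁' t) t)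
    (heq₁a : ∀ t ∈ Icc (0:ℝ) T, ∀ v : V, a (u₁ t) v = b v (p₁ t))
    (heq₁b : ∀ t ∈ Icc (0:ℝ) T, ∀ μ : M,
      ⟪p₁' t, μ⟫ + c (p₁ t) μ + b (u₁ t) μ = ⟪L t, μ⟫)
    -- (p₂, u₂) is a strong solution
    (hp₂cont : ContinuousOn p₂ (Icc 0 T)) (hp₂0 : p₂ 0 = p₀)
    (hp₂deriv : ∀ t ∈ Icc (0:ℝ) T, HasDerivAt p₂ (p₂' t) t)
    (heq₂a : ∀ t ∈ Icc (0:ℝ) T, ∀ v : V, a (u₂ t) v = b v (p₂ t))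
    (heq₂b : ∀ t ∈ Icc (0:ℝ) T, ∀ μ : M,
      ⟪p₂' t, μ⟫ + c (p₂ t) μ + b (u₂ t) μ = ⟪L t, μ⟫) :
    ∀ t ∈ Icc (0:ℝ) T, p₁ t = p₂ t ∧ u₁ t = u₂ t :=
  stmt_1_general a b c H1 H2 T L p₀ p₁ p₁' p₂ p₂' u₁ u₂ hp₁0 hp₁deriv heq₁a heq₁b hp₂0 hp₂deriv
    heq₂a heq₂b
end

section
/- First a priori estimate of Lemma A.1 (L^∞-in-time bound on the pressure): under hypotheses (H1) and (H2), if (p,u) is a strong solution of the abstract evolution problem in mixed form on [0,T], then for every t ∈ [0,T] one has ‖p(t)‖²_M ≤ exp(T) · ( ‖p₀‖²_M + ∫₀ᵀ ‖L(s)‖²_M ds ). -/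
/-!
Testing the second equation against `p` and the first against `u` gives the energy identity
`½ d/dt ‖p‖² + c(p, p) + a(u, u) = ⟪L, p⟫`. The two form terms are nonnegative by (H1) and (H2),
and Young's inequality leaves `d/dt ‖p‖² ≤ ‖p‖² + ‖L‖²`. Hence `d/dt (e^{-t} ‖p(t)‖²) ≤ ‖L(t)‖²`,
and integrating gives the Gronwall bound.
-/

open MeasureTheory Set
open scoped RealInnerProductSpace

theorem le_exp_mul_add_integral_of_deriv_le_add {f f' ℓ : ℝ → ℝ} {a b : ℝ} (hab : a ≤ b)
    (hf : ∀ s ∈ Icc a b, HasDerivAt f (f' s) s) (hf' : ∀ s ∈ Icc a b, f' s ≤ f s + ℓ s)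
    (hℓ : ∀ s ∈ Icc a b, 0 ≤ ℓ s) (hℓint : IntegrableOn ℓ (Icc a b)) :
    f b ≤ Real.exp (b - a) * (f a + ∫ s in a..b, ℓ s) := by
  set g : ℝ → ℝ := fun s => Real.exp (a - s) * f s
  have hg : ∀ s ∈ Icc a b, HasDerivAt g (Real.exp (a - s) * (f' s - f s)) s := by
    intro s hs
    have hexp : HasDerivAt (fun s => Real.exp (a - s)) (-Real.exp (a - s)) s := by
      simpa using ((hasDerivAt_id s).const_sub a).exp
    exact (hexp.mul (hf s hs)).congr_deriv (by ring)
  have hg' : ∀ s ∈ Icc a b, Real.exp (a - s) * (f' s - f s) ≤ ℓ s := by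
    intro s hs
    calc Real.exp (a - s) * (f' s - f s) ≤ Real.exp (a - s) * ℓ s := by
          gcongr
          linarith [hf' s hs]
      _ ≤ 1 * ℓ s := by
          gcongr
          · exact hℓ s hs
          · exact Real.exp_le_one_iff.mpr (by linarith [hs.1])
      _ = ℓ s := one_mul _
  have hFTC : g b - g a ≤ ∫ s in a..b, ℓ s :=
    intervalIntegral.sub_le_integral_of_hasDeriv_right_of_le hab
      (fun s hs => (hg s hs).continuousAt.continuousWithinAt)
      (fun s hs => (hg s (Ioo_subset_Icc_self hs)).hasDerivWithinAt) hℓint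
      (fun s hs => hg' s (Ioo_subset_Icc_self hs))
  have hgb : f b = Real.exp (b - a) * g b := by
    simp only [g, ← mul_assoc, ← Real.exp_add]
    simp
  have hga : g a = f a := by simp [g]
  rw [hgb]
  gcongr
  linarith

theorem le_exp_mul_add_integral_of_deriv_le_add_of_mem_Icc {f f' ℓ : ℝ → ℝ} {a b : ℝ}
    (hf : ∀ s ∈ Icc a b, HasDerivAt f (f' s) s) (hf' : ∀ s ∈ Icc a b, f' s ≤ f s + ℓ s)
    (hfa : 0 ≤ f a) (hℓ : ∀ s ∈ Icc a b, 0 ≤ ℓ s) (hℓint : IntegrableOn ℓ (Icc a b)) :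
    ∀ t ∈ Icc a b, f t ≤ Real.exp (b - a) * (f a + ∫ s in a..b, ℓ s) := by
  intro t ht
  have hsub : Icc a t ⊆ Icc a b := Icc_subset_Icc_right ht.2
  have hmono : (∫ s in a..t, ℓ s) ≤ ∫ s in a..b, ℓ s :=
    intervalIntegral.integral_mono_interval le_rfl ht.1 ht.2
      ((ae_restrict_iff' measurableSet_Ioc).mpr
        (Filter.Eventually.of_forall fun s hs => hℓ s (Ioc_subset_Icc_self hs)))
      ((intervalIntegrable_iff_integrableOn_Icc_of_le (ht.1.trans ht.2)).mpr hℓint)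
  have hnonneg : 0 ≤ ∫ s in a..t, ℓ s :=
    intervalIntegral.integral_nonneg ht.1 fun s hs => hℓ s (hsub hs)
  calc f t ≤ Real.exp (t - a) * (f a + ∫ s in a..t, ℓ s) :=
        le_exp_mul_add_integral_of_deriv_le_add ht.1 (fun s hs => hf s (hsub hs))
          (fun s hs => hf' s (hsub hs)) (fun s hs => hℓ s (hsub hs)) (hℓint.mono_set hsub)
    _ ≤ Real.exp (b - a) * (f a + ∫ s in a..b, ℓ s) := by
        gcongr
        exact ht.2

section MixedSystem

variable {M V : Type*} [NormedAddCommGroup M] [InnerProductSpace ℝ M]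
  [NormedAddCommGroup V] [InnerProductSpace ℝ V]

theorem two_mul_inner_le_of_mixed_system {a : V →L[ℝ] V →L[ℝ] ℝ} {b : V →L[ℝ] M →L[ℝ] ℝ}
    {c : M →L[ℝ] M →L[ℝ] ℝ} (H1 : ∀ u : V, u ≠ 0 → 0 < a u u) (H2 : ∀ μ : M, 0 ≤ c μ μ)
    {p q ℓ : M} {u : V} (ha : ∀ v : V, a u v = b v p)
    (hb : ∀ μ : M, ⟪q, μ⟫ + c p μ + b u μ = ⟪ℓ, μ⟫) :
    2 * ⟪p, q⟫ ≤ ‖p‖ ^ 2 + ‖ℓ‖ ^ 2 := by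
  have hbu : 0 ≤ b u p := by
    rw [← ha u]
    rcases eq_or_ne u 0 with rfl | hu
    · simp
    · exact (H1 u hu).le
  have hinner : ⟪p, q⟫ ≤ ‖p‖ * ‖ℓ‖ := by
    calc ⟪p, q⟫ = ⟪ℓ, p⟫ - c p p - b u p := by rw [real_inner_comm, ← hb p]; ring
      _ ≤ ⟪ℓ, p⟫ := by linarith [H2 p]
      _ ≤ ‖p‖ * ‖ℓ‖ := by rw [mul_comm]; exact real_inner_le_norm ℓ p
  linarith [two_mul_le_add_sq ‖p‖ ‖ℓ‖]

end MixedSystem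

theorem stmt_2_general
    {M V : Type*}
    [NormedAddCommGroup M] [InnerProductSpace ℝ M]
    [NormedAddCommGroup V] [InnerProductSpace ℝ V]
    (a : V →L[ℝ] V →L[ℝ] ℝ) (b : V →L[ℝ] M →L[ℝ] ℝ) (c : M →L[ℝ] M →L[ℝ] ℝ)
    (H1 : ∀ u : V, u ≠ 0 → 0 < a u u)
    (H2 : ∀ μ : M, 0 ≤ c μ μ)
    (T : ℝ)
    (L : ℝ → M)
    (hLint : IntegrableOn (fun t => ‖L t‖ ^ 2) (Icc 0 T))
    (p₀ : M)
    (p p' : ℝ → M) (u : ℝ → V)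
    (hp0 : p 0 = p₀)
    (hpderiv : ∀ t ∈ Icc (0:ℝ) T, HasDerivAt p (p' t) t)
    (heqa : ∀ t ∈ Icc (0:ℝ) T, ∀ v : V, a (u t) v = b v (p t))
    (heqb : ∀ t ∈ Icc (0:ℝ) T, ∀ μ : M,
      ⟪p' t, μ⟫ + c (p t) μ + b (u t) μ = ⟪L t, μ⟫) :
    ∀ t ∈ Icc (0:ℝ) T,
      ‖p t‖ ^ 2 ≤ Real.exp T * (‖p₀‖ ^ 2 + ∫ s in (0:ℝ)..T, ‖L s‖ ^ 2) := by
  have henergy := le_exp_mul_add_integral_of_deriv_le_add_of_mem_Icc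
    (fun s hs => (hpderiv s hs).norm_sq)
    (fun s hs => two_mul_inner_le_of_mixed_system H1 H2 (heqa s hs) (heqb s hs))
    (sq_nonneg ‖p 0‖) (fun s _ => sq_nonneg ‖L s‖) hLint
  simpa only [sub_zero, hp0] using henergy

/-- First a priori estimate of Lemma A.1: L^∞-in-time bound on the pressure. -/
theorem stmt_2
    {M V : Type*}
    [NormedAddCommGroup M] [InnerProductSpace ℝ M] [CompleteSpace M]
    [NormedAddCommGroup V] [InnerProductSpace ℝ V] [CompleteSpace V]
    (a : V →L[ℝ] V →L[ℝ] ℝ) (b : V →L[ℝ] M →L[ℝ] ℝ) (c : M →L[ℝ] M →L[ℝ] ℝ)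
    (H1 : ∀ u : V, u ≠ 0 → 0 < a u u)
    (H2 : ∀ μ : M, 0 ≤ c μ μ)
    (T : ℝ) (hT : 0 < T)
    (L : ℝ → M) (hLmeas : StronglyMeasurable L)
    (hLint : IntegrableOn (fun t => ‖L t‖ ^ 2) (Icc 0 T))
    (p₀ : M)
    (p p' : ℝ → M) (u : ℝ → V)
    (hpcont : ContinuousOn p (Icc 0 T)) (hp0 : p 0 = p₀)
    (hpderiv : ∀ t ∈ Icc (0:ℝ) T, HasDerivAt p (p' t) t)
    (heqa : ∀ t ∈ Icc (0:ℝ) T, ∀ v : V, a (u t) v = b v (p t))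
    (heqb : ∀ t ∈ Icc (0:ℝ) T, ∀ μ : M,
      ⟪p' t, μ⟫ + c (p t) μ + b (u t) μ = ⟪L t, μ⟫) :
    ∀ t ∈ Icc (0:ℝ) T,
      ‖p t‖ ^ 2 ≤ Real.exp T * (‖p₀‖ ^ 2 + ∫ s in (0:ℝ)..T, ‖L s‖ ^ 2) :=
  stmt_2_general a b c H1 H2 T L hLint p₀ p p' u hp0 hpderiv heqa heqb
end

section
/- Second a priori estimate of Lemma A.1 (L²-in-time bound for the velocity in the a-norm): under hypotheses (H1) and (H2), if (p,u) is a strong solution of the abstract evolution problem in mixed form on [0,T] and the function t ↦ a(u(t), u(t)) is integrable on [0,T], then ∫₀ᵀ a(u(t), u(t)) dt ≤ (1/2)·(1 + T·exp(T)) · ( ‖p₀‖²_M + ∫₀ᵀ ‖L(s)‖²_M ds ). -/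
/-!
Testing the second equation with `μ = p` and the first with `v = u` gives the energy identity
`½ (‖p‖²)' + a(u,u) + c(p,p) = ⟪L,p⟫ ≤ ½ ‖L‖² + ½ ‖p‖²`. Dropping `a(u,u) ≥ 0` and `c(p,p) ≥ 0`,
the weight `exp (-t)` turns it into `‖p t‖² ≤ exp t · K` with `K = ‖p₀‖² + ∫₀ᵀ ‖L‖²`.
Integrating the energy inequality over `[0,T]` once more, now keeping `a(u,u)` and using that
bound on `‖p‖²`, gives `2 ∫₀ᵀ a(u,u) ≤ K + T exp T · K`.
-/

open MeasureTheory Set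
open scoped RealInnerProductSpace

theorem two_mul_inner_add_two_mul_le_norm_sq_add_norm_sq
    {M V : Type*} [NormedAddCommGroup M] [InnerProductSpace ℝ M]
    [NormedAddCommGroup V] [NormedSpace ℝ V]
    (a : V →L[ℝ] V →L[ℝ] ℝ) (b : V →L[ℝ] M →L[ℝ] ℝ) (c : M →L[ℝ] M →L[ℝ] ℝ)
    {p p' L : M} {u : V} (hc : 0 ≤ c p p) (ha : a u u = b u p)
    (hb : ⟪p', p⟫ + c p p + b u p = ⟪L, p⟫) :
    2 * ⟪p, p'⟫ + 2 * a u u ≤ ‖L‖ ^ 2 + ‖p‖ ^ 2 := by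
  rw [real_inner_comm]
  linarith [real_inner_le_norm L p, two_mul_le_add_sq ‖L‖ ‖p‖]

theorem le_exp_mul_add_integral_of_hasDerivAt_le {f f' g : ℝ → ℝ} {T : ℝ}
    (hf : ContinuousOn f (Icc 0 T)) (hf' : ∀ t ∈ Ioo 0 T, HasDerivAt f (f' t) t)
    (hg : IntegrableOn g (Icc 0 T)) (hg₀ : ∀ t ∈ Icc 0 T, 0 ≤ g t)
    (hle : ∀ t ∈ Ioo 0 T, f' t ≤ f t + g t) :
    ∀ t ∈ Icc 0 T, f t ≤ Real.exp t * (f 0 + ∫ s in (0:ℝ)..T, g s) := by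
  intro t ht
  have hderiv : ∀ s ∈ Ioo 0 T,
      HasDerivAt (fun s => Real.exp (-s) * f s) (Real.exp (-s) * (f' s - f s)) s := by
    intro s hs
    refine ((hasDerivAt_neg s).exp.mul (hf' s hs)).congr_deriv ?_
    ring
  have hbound : ∀ s ∈ Ioo 0 T, Real.exp (-s) * (f' s - f s) ≤ g s := fun s hs =>
    calc Real.exp (-s) * (f' s - f s) ≤ Real.exp (-s) * g s :=
          mul_le_mul_of_nonneg_left (by linarith [hle s hs]) (Real.exp_pos _).le
      _ ≤ g s := mul_le_of_le_one_left (hg₀ s (Ioo_subset_Icc_self hs))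
          (Real.exp_le_one_iff.2 (by linarith [hs.1]))
  have hweighted : Real.exp (-t) * f t - f 0 ≤ ∫ s in (0:ℝ)..t, g s := by
    have hsub : Icc 0 t ⊆ Icc 0 T := Icc_subset_Icc le_rfl ht.2
    have hIoo : ∀ s ∈ Ioo 0 t, s ∈ Ioo 0 T := fun s hs => ⟨hs.1, hs.2.trans_le ht.2⟩
    simpa only [neg_zero, Real.exp_zero, one_mul] using
      intervalIntegral.sub_le_integral_of_hasDeriv_right_of_le
        (g := fun s => Real.exp (-s) * f s) ht.1
        ((Real.continuous_exp.comp continuous_neg).continuousOn.mul (hf.mono hsub))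
        (fun s hs => (hderiv s (hIoo s hs)).hasDerivWithinAt) (hg.mono_set hsub)
        (fun s hs => hbound s (hIoo s hs))
  have hmono : ∫ s in (0:ℝ)..t, g s ≤ ∫ s in (0:ℝ)..T, g s :=
    intervalIntegral.integral_mono_interval le_rfl ht.1 ht.2
      ((ae_restrict_iff' measurableSet_Ioc).2 <|
        .of_forall fun s hs => hg₀ s (Ioc_subset_Icc_self hs))
      ((intervalIntegrable_iff_integrableOn_Icc_of_le (ht.1.trans ht.2)).2 hg)
  calc f t = Real.exp t * (Real.exp (-t) * f t) := by
        rw [← mul_assoc, ← Real.exp_add, add_neg_cancel, Real.exp_zero, one_mul]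
    _ ≤ Real.exp t * (f 0 + ∫ s in (0:ℝ)..T, g s) := by
        gcongr
        linarith

theorem sub_add_integral_le_integral_of_hasDerivAt {g g' ψ φ : ℝ → ℝ} {a b : ℝ} (hab : a ≤ b)
    (hcont : ContinuousOn g (Icc a b)) (hderiv : ∀ x ∈ Ioo a b, HasDerivAt g (g' x) x)
    (hψ : IntegrableOn ψ (Icc a b)) (hφ : IntegrableOn φ (Icc a b))
    (hle : ∀ x ∈ Ioo a b, g' x + ψ x ≤ φ x) :
    g b - g a + ∫ x in a..b, ψ x ≤ ∫ x in a..b, φ x := by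
  have h := intervalIntegral.sub_le_integral_of_hasDeriv_right_of_le hab hcont
    (fun x hx => (hderiv x hx).hasDerivWithinAt) (φ := fun x => φ x - ψ x) (hφ.sub hψ)
    (fun x hx => le_sub_iff_add_le.2 (hle x hx))
  rw [intervalIntegral.integral_sub ((intervalIntegrable_iff_integrableOn_Icc_of_le hab).2 hφ)
    ((intervalIntegrable_iff_integrableOn_Icc_of_le hab).2 hψ)] at h
  linarith

theorem stmt_3_general
    {M V : Type*}
    [NormedAddCommGroup M] [InnerProductSpace ℝ M]
    [NormedAddCommGroup V] [InnerProductSpace ℝ V]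
    (a : V →L[ℝ] V →L[ℝ] ℝ) (b : V →L[ℝ] M →L[ℝ] ℝ) (c : M →L[ℝ] M →L[ℝ] ℝ)
    (H1 : ∀ u : V, u ≠ 0 → 0 < a u u)
    (H2 : ∀ μ : M, 0 ≤ c μ μ)
    (T : ℝ) (hT : 0 < T)
    (L : ℝ → M)
    (hLint : IntegrableOn (fun t => ‖L t‖ ^ 2) (Icc 0 T))
    (p₀ : M)
    (p p' : ℝ → M) (u : ℝ → V)
    (hp0 : p 0 = p₀)
    (hpderiv : ∀ t ∈ Icc (0:ℝ) T, HasDerivAt p (p' t) t)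
    (heqa : ∀ t ∈ Icc (0:ℝ) T, ∀ v : V, a (u t) v = b v (p t))
    (heqb : ∀ t ∈ Icc (0:ℝ) T, ∀ μ : M,
      ⟪p' t, μ⟫ + c (p t) μ + b (u t) μ = ⟪L t, μ⟫)
    (huint : IntegrableOn (fun t => a (u t) (u t)) (Icc 0 T)) :
    (∫ t in (0:ℝ)..T, a (u t) (u t)) ≤
      (1 / 2) * (1 + T * Real.exp T) * (‖p₀‖ ^ 2 + ∫ s in (0:ℝ)..T, ‖L s‖ ^ 2) := by
  set K := ‖p₀‖ ^ 2 + ∫ s in (0:ℝ)..T, ‖L s‖ ^ 2 with hK_def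
  have hK : 0 ≤ K := add_nonneg (sq_nonneg _)
    (intervalIntegral.integral_nonneg hT.le fun s _ => sq_nonneg _)
  have ha₀ : ∀ t, 0 ≤ a (u t) (u t) := fun t => by
    rcases eq_or_ne (u t) 0 with h | h
    · simp [h]
    · exact (H1 _ h).le
  have hderiv : ∀ t ∈ Icc 0 T, HasDerivAt (‖p ·‖ ^ 2) (2 * ⟪p t, p' t⟫) t :=
    fun t ht => (hpderiv t ht).norm_sq
  have hcont : ContinuousOn (‖p ·‖ ^ 2) (Icc 0 T) := HasDerivAt.continuousOn hderiv
  have henergy : ∀ t ∈ Icc 0 T, 2 * ⟪p t, p' t⟫ + 2 * a (u t) (u t) ≤ ‖L t‖ ^ 2 + ‖p t‖ ^ 2 :=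
    fun t ht => two_mul_inner_add_two_mul_le_norm_sq_add_norm_sq a b c (H2 _)
      (heqa t ht (u t)) (heqb t ht (p t))
  have hgrowth : ∀ t ∈ Icc 0 T, ‖p t‖ ^ 2 ≤ Real.exp T * K := by
    intro t ht
    refine (le_exp_mul_add_integral_of_hasDerivAt_le hcont
      (fun s hs => hderiv s (Ioo_subset_Icc_self hs)) hLint (fun s _ => sq_nonneg _)
      (fun s hs => ?_) t ht).trans ?_
    · linarith [henergy s (Ioo_subset_Icc_self hs), ha₀ s]
    · rw [hp0]
      exact mul_le_mul_of_nonneg_right (Real.exp_le_exp.2 ht.2) hK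
  have hintegrated := sub_add_integral_le_integral_of_hasDerivAt
    (φ := fun t => ‖L t‖ ^ 2 + Real.exp T * K) hT.le hcont
    (fun t ht => hderiv t (Ioo_subset_Icc_self ht)) (huint.const_mul 2)
    (hLint.add (integrableOn_const (C := Real.exp T * K) (by simp)))
    (fun t ht => (henergy t (Ioo_subset_Icc_self ht)).trans
      (add_le_add_right (hgrowth t (Ioo_subset_Icc_self ht)) _))
  rw [intervalIntegral.integral_const_mul, intervalIntegral.integral_add
    ((intervalIntegrable_iff_integrableOn_Icc_of_le hT.le).2 hLint) intervalIntegrable_const,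
    intervalIntegral.integral_const, smul_eq_mul, sub_zero, hp0] at hintegrated
  linarith [sq_nonneg ‖p T‖]

/-- Second a priori estimate of Lemma A.1: L²-in-time bound for the velocity in
the `a`-norm. -/
theorem stmt_3
    {M V : Type*}
    [NormedAddCommGroup M] [InnerProductSpace ℝ M] [CompleteSpace M]
    [NormedAddCommGroup V] [InnerProductSpace ℝ V] [CompleteSpace V]
    (a : V →L[ℝ] V →L[ℝ] ℝ) (b : V →L[ℝ] M →L[ℝ] ℝ) (c : M →L[ℝ] M →L[ℝ] ℝ)
    (H1 : ∀ u : V, u ≠ 0 → 0 < a u u)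
    (H2 : ∀ μ : M, 0 ≤ c μ μ)
    (T : ℝ) (hT : 0 < T)
    (L : ℝ → M) (hLmeas : StronglyMeasurable L)
    (hLint : IntegrableOn (fun t => ‖L t‖ ^ 2) (Icc 0 T))
    (p₀ : M)
    (p p' : ℝ → M) (u : ℝ → V)
    (hpcont : ContinuousOn p (Icc 0 T)) (hp0 : p 0 = p₀)
    (hpderiv : ∀ t ∈ Icc (0:ℝ) T, HasDerivAt p (p' t) t)
    (heqa : ∀ t ∈ Icc (0:ℝ) T, ∀ v : V, a (u t) v = b v (p t))
    (heqb : ∀ t ∈ Icc (0:ℝ) T, ∀ μ : M,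
      ⟪p' t, μ⟫ + c (p t) μ + b (u t) μ = ⟪L t, μ⟫)
    (huint : IntegrableOn (fun t => a (u t) (u t)) (Icc 0 T)) :
    (∫ t in (0:ℝ)..T, a (u t) (u t)) ≤
      (1 / 2) * (1 + T * Real.exp T) * (‖p₀‖ ^ 2 + ∫ s in (0:ℝ)..T, ‖L s‖ ^ 2) :=
  stmt_3_general a b c H1 H2 T hT L hLint p₀ p p' u hp0 hpderiv heqa heqb huint
end

section
/- Third a priori estimate of Lemma A.1 (L²-in-time bound on the time derivative of the pressure): assume hypotheses (H1), (H2) and (H4), that a and c are symmetric, and that C_c > 0 satisfies c(η,μ) ≤ C_c‖η‖_M‖μ‖_M for all η, μ ∈ M. Let (p,u) be a strong solution of the abstract evolution problem in mixed form on [0,T] with initial datum p₀ = ι w₀ for some w₀ ∈ W, and suppose in addition that u is continuous on [0,T], u is differentiable at every t ∈ [0,T] with derivative u'(t), the differentiated equation a(u'(t), v) = b(v, p'(t)) holds for all v ∈ Σ and t ∈ [0,T], and t ↦ ‖p'(t)‖²_M is integrable on [0,T]. Then ∫₀ᵀ ‖p'(t)‖²_M dt ≤ ∫₀ᵀ ‖L(t)‖²_M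 dt + C_c·‖p₀‖²_M + C_b²·‖w₀‖²_W. -/
open MeasureTheory Set
open scoped RealInnerProductSpace

/-!
The energy `E t = c(p t, p t) + a(u t, u t)` satisfies `E' = 2⟪L, p'⟫ - 2‖p'‖²`: test the second
equation with `p'` and the differentiated first equation with `u`. Young's inequality bounds this by
`‖L‖² - ‖p'‖²`, so integrating over `[0, T]` and dropping `E T ≥ 0` leaves
`∫ ‖p'‖² ≤ ∫ ‖L‖² + E 0`. Finally `c(p₀, p₀) ≤ C_c ‖p₀‖²`, and testing the first equation at `t = 0`
with `u 0` gives `a(u 0, u 0) = b(u 0, ι w₀) ≤ C_b √(a(u 0, u 0)) ‖w₀‖`, i.e.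
`a(u 0, u 0) ≤ C_b² ‖w₀‖²`.
-/

theorem le_sq_of_le_mul_sqrt {x C : ℝ} (hx : 0 ≤ x) (h : x ≤ C * √x) : x ≤ C ^ 2 := by
  nlinarith [Real.sq_sqrt hx, Real.sqrt_nonneg x]

theorem two_mul_real_inner_le_add_sq {F : Type*} [NormedAddCommGroup F] [InnerProductSpace ℝ F]
    (x y : F) : 2 * ⟪x, y⟫ ≤ ‖x‖ ^ 2 + ‖y‖ ^ 2 := by
  linarith [norm_sub_sq_real x y, sq_nonneg ‖x - y‖]

theorem HasDerivAt.bilin_self_of_symm {E : Type*} [NormedAddCommGroup E] [NormedSpace ℝ E]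
    {B : E →L[ℝ] E →L[ℝ] ℝ} (hB : ∀ x y, B x y = B y x) {f : ℝ → E} {f' : E} {t : ℝ}
    (hf : HasDerivAt f f' t) : HasDerivAt (fun s => B (f s) (f s)) (2 * B (f t) f') t := by
  refine ((B.hasFDerivAt.comp_hasDerivAt t hf).clm_apply hf).congr_deriv ?_
  simp only [Function.comp_apply, hB f' (f t)]
  ring

theorem sub_le_integral_of_hasDerivAt_of_le {g g' φ : ℝ → ℝ} {a b : ℝ} (hab : a ≤ b)
    (hderiv : ∀ x ∈ Icc a b, HasDerivAt g (g' x) x) (hφ : IntegrableOn φ (Icc a b))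
    (hg'φ : ∀ x ∈ Ioo a b, g' x ≤ φ x) : g b - g a ≤ ∫ x in a..b, φ x :=
  intervalIntegral.sub_le_integral_of_hasDeriv_right_of_le hab
    (fun x hx => (hderiv x hx).continuousAt.continuousWithinAt)
    (fun x hx => (hderiv x (Ioo_subset_Icc_self hx)).hasDerivWithinAt) hφ hg'φ

theorem hasDerivAt_mixed_energy {M V : Type*} [NormedAddCommGroup M] [InnerProductSpace ℝ M]
    [NormedAddCommGroup V] [NormedSpace ℝ V]
    {a : V →L[ℝ] V →L[ℝ] ℝ} {b : V →L[ℝ] M →L[ℝ] ℝ} {c : M →L[ℝ] M →L[ℝ] ℝ}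
    (hasymm : ∀ u v : V, a u v = a v u) (hcsymm : ∀ η μ : M, c η μ = c μ η)
    {p : ℝ → M} {u : ℝ → V} {t : ℝ} {dp ℓ : M} {du : V}
    (hp : HasDerivAt p dp t) (hu : HasDerivAt u du t)
    (heqa' : ∀ v : V, a du v = b v dp)
    (heqb : ∀ μ : M, ⟪dp, μ⟫ + c (p t) μ + b (u t) μ = ⟪ℓ, μ⟫) :
    HasDerivAt (fun s => c (p s) (p s) + a (u s) (u s)) (2 * (⟪ℓ, dp⟫ - ‖dp‖ ^ 2)) t := by
  refine ((hp.bilin_self_of_symm hcsymm).add (hu.bilin_self_of_symm hasymm)).congr_deriv ?_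
  linarith [heqb dp, heqa' (u t), hasymm du (u t), real_inner_self_eq_norm_sq dp]

theorem stmt_4_general
    {M V W : Type*}
    [NormedAddCommGroup M] [InnerProductSpace ℝ M]
    [NormedAddCommGroup V] [InnerProductSpace ℝ V]
    [NormedAddCommGroup W] [NormedSpace ℝ W]
    (a : V →L[ℝ] V →L[ℝ] ℝ) (b : V →L[ℝ] M →L[ℝ] ℝ) (c : M →L[ℝ] M →L[ℝ] ℝ)
    (ι : W →L[ℝ] M)
    (Cb Cc : ℝ)
    (H1 : ∀ u : V, u ≠ 0 → 0 < a u u)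
    (H2 : ∀ μ : M, 0 ≤ c μ μ)
    (H4 : ∀ (u : V) (w : W), b u (ι w) ≤ Cb * Real.sqrt (a u u) * ‖w‖)
    (hasymm : ∀ u v : V, a u v = a v u)
    (hcsymm : ∀ η μ : M, c η μ = c μ η)
    (hccont : ∀ η μ : M, c η μ ≤ Cc * ‖η‖ * ‖μ‖)
    (T : ℝ) (hT : 0 < T)
    (L : ℝ → M)
    (hLint : IntegrableOn (fun t => ‖L t‖ ^ 2) (Icc 0 T))
    (w₀ : W) (p₀ : M) (hp₀ : p₀ = ι w₀)
    (p p' : ℝ → M) (u u' : ℝ → V)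
    -- (p, u) is a strong solution
    (hp0 : p 0 = p₀)
    (hpderiv : ∀ t ∈ Icc (0:ℝ) T, HasDerivAt p (p' t) t)
    (heqa : ∀ t ∈ Icc (0:ℝ) T, ∀ v : V, a (u t) v = b v (p t))
    (heqb : ∀ t ∈ Icc (0:ℝ) T, ∀ μ : M,
      ⟪p' t, μ⟫ + c (p t) μ + b (u t) μ = ⟪L t, μ⟫)
    -- additional regularity of u and the differentiated equation
    (huderiv : ∀ t ∈ Icc (0:ℝ) T, HasDerivAt u (u' t) t)
    (heqa' : ∀ t ∈ Icc (0:ℝ) T, ∀ v : V, a (u' t) v = b v (p' t))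
    (hp'int : IntegrableOn (fun t => ‖p' t‖ ^ 2) (Icc 0 T)) :
    (∫ t in (0:ℝ)..T, ‖p' t‖ ^ 2) ≤
      (∫ t in (0:ℝ)..T, ‖L t‖ ^ 2) + Cc * ‖p₀‖ ^ 2 + Cb ^ 2 * ‖w₀‖ ^ 2 := by
  have ha_nonneg (v : V) : 0 ≤ a v v := by
    rcases eq_or_ne v 0 with rfl | hv
    · simp
    · exact (H1 v hv).le
  have henergy : c (p T) (p T) + a (u T) (u T) - (c (p 0) (p 0) + a (u 0) (u 0)) ≤
      ∫ t in (0:ℝ)..T, (‖L t‖ ^ 2 - ‖p' t‖ ^ 2) :=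
    sub_le_integral_of_hasDerivAt_of_le hT.le
      (fun t ht => hasDerivAt_mixed_energy hasymm hcsymm (hpderiv t ht) (huderiv t ht)
        (heqa' t ht) (heqb t ht))
      (hLint.sub hp'int) fun t _ => by linarith [two_mul_real_inner_le_add_sq (L t) (p' t)]
  rw [intervalIntegral.integral_sub
    ((intervalIntegrable_iff_integrableOn_Icc_of_le hT.le).2 hLint)
    ((intervalIntegrable_iff_integrableOn_Icc_of_le hT.le).2 hp'int)] at henergy
  have hc0 : c (p 0) (p 0) ≤ Cc * ‖p₀‖ ^ 2 := by
    simpa only [hp0, mul_assoc, ← sq] using hccont p₀ p₀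
  have ha0 : a (u 0) (u 0) ≤ Cb ^ 2 * ‖w₀‖ ^ 2 := by
    rw [← mul_pow]
    refine le_sq_of_le_mul_sqrt (ha_nonneg _) ?_
    calc a (u 0) (u 0) = b (u 0) (ι w₀) := by rw [heqa 0 (left_mem_Icc.2 hT.le), hp0, hp₀]
      _ ≤ Cb * √(a (u 0) (u 0)) * ‖w₀‖ := H4 _ _
      _ = Cb * ‖w₀‖ * √(a (u 0) (u 0)) := by ring
  linarith [H2 (p T), ha_nonneg (u T)]

/-- Third a priori estimate of Lemma A.1: L²-in-time bound on the time
derivative of the pressure. -/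
theorem stmt_4
    {M V W : Type*}
    [NormedAddCommGroup M] [InnerProductSpace ℝ M] [CompleteSpace M]
    [NormedAddCommGroup V] [InnerProductSpace ℝ V] [CompleteSpace V]
    [NormedAddCommGroup W] [NormedSpace ℝ W]
    (a : V →L[ℝ] V →L[ℝ] ℝ) (b : V →L[ℝ] M →L[ℝ] ℝ) (c : M →L[ℝ] M →L[ℝ] ℝ)
    (ι : W →L[ℝ] M)
    (Cb Cc : ℝ) (hCb : 0 < Cb) (hCc : 0 < Cc)
    (H1 : ∀ u : V, u ≠ 0 → 0 < a u u)
    (H2 : ∀ μ : M, 0 ≤ c μ μ)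
    (H4 : ∀ (u : V) (w : W), b u (ι w) ≤ Cb * Real.sqrt (a u u) * ‖w‖)
    (hasymm : ∀ u v : V, a u v = a v u)
    (hcsymm : ∀ η μ : M, c η μ = c μ η)
    (hccont : ∀ η μ : M, c η μ ≤ Cc * ‖η‖ * ‖μ‖)
    (T : ℝ) (hT : 0 < T)
    (L : ℝ → M) (hLmeas : StronglyMeasurable L)
    (hLint : IntegrableOn (fun t => ‖L t‖ ^ 2) (Icc 0 T))
    (w₀ : W) (p₀ : M) (hp₀ : p₀ = ι w₀)
    (p p' : ℝ → M) (u u' : ℝ → V)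
    -- (p, u) is a strong solution
    (hpcont : ContinuousOn p (Icc 0 T)) (hp0 : p 0 = p₀)
    (hpderiv : ∀ t ∈ Icc (0:ℝ) T, HasDerivAt p (p' t) t)
    (heqa : ∀ t ∈ Icc (0:ℝ) T, ∀ v : V, a (u t) v = b v (p t))
    (heqb : ∀ t ∈ Icc (0:ℝ) T, ∀ μ : M,
      ⟪p' t, μ⟫ + c (p t) μ + b (u t) μ = ⟪L t, μ⟫)
    -- additional regularity of u and the differentiated equation
    (hucont : ContinuousOn u (Icc 0 T))
    (huderiv : ∀ t ∈ Icc (0:ℝ) T, HasDerivAt u (u' t) t)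
    (heqa' : ∀ t ∈ Icc (0:ℝ) T, ∀ v : V, a (u' t) v = b v (p' t))
    (hp'int : IntegrableOn (fun t => ‖p' t‖ ^ 2) (Icc 0 T)) :
    (∫ t in (0:ℝ)..T, ‖p' t‖ ^ 2) ≤
      (∫ t in (0:ℝ)..T, ‖L t‖ ^ 2) + Cc * ‖p₀‖ ^ 2 + Cb ^ 2 * ‖w₀‖ ^ 2 :=
  stmt_4_general a b c ι Cb Cc H1 H2 H4 hasymm hcsymm hccont T hT L hLint w₀ p₀ hp₀ p p' u u' hp0
    hpderiv heqa heqb huderiv heqa' hp'int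
end
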